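/- Let M ≥ 1, N ≥ 1, let Z_0 ≥ Z_1 ≥ … ≥ Z_{N−1} be reals, let W_r^{(m)} (0 ≤ r ≤ N−1, m ∈ ℤ) be reals with W_r^{(m+M)} = W_r^{(m)} satisfying W^{(m)}_{r_1} − W^{(m+1)}_{r_1} + W^{(m+1)}_{r_0} − W^{(m)}_{r_0} + (Z_{r_0} − Z_{r_1})/M ≥ 0 for all m ∈ ℤ and all 0 ≤ r_0 < r_1 ≤ N−1, and let S^{(t)} (t ≥ 0) be reals. Define T^{(k,t)}_0 := 0 and, for 1 ≤ n ≤ N, T^{(k,t)}_n := min over 0 ≤ r_0 < r_1 < … < r_{n−1} ≤ N−1 of Σ_{j=0}^{n−1} ( W_{r_j}^{(k+j)} + ((k + (M+1)j)/M)·Z_{r_j} + Σ_{τ=0}^{t−1} min(Z_{r_j}, S^{(τ)}) ). In ℝ ∪ {+∞}, with T^{(k,t)}_n := +∞ for n > N, define Q^{(k,t)}_n := T^{(k,t)}_n − T^{(k,t)}_{n+1} + T^{(k+1,t)}_{n+1} − T^{(k+1,t)}_n (0 ≤ n ≤ N−1), E^{(k,t)}_n := T^{(k,t)}_{n+2} −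 T^{(k,t)}_{n+1} + T^{(k+M,t)}_n − T^{(k+M,t)}_{n+1} (with E^{(k,t)}_{N−1} = +∞), Ẽ^{(k,t)}_n := T^{(k,t)}_{n+2} − T^{(k,t)}_{n+1} + T^{(k,t+1)}_n − T^{(k,t+1)}_{n+1} (with Ẽ^{(k,t)}_{N−1} = +∞), D^{(k,t)}_n := T^{(k,t+1)}_n − T^{(k,t)}_{n+1} + T^{(k+1,t)}_{n+1} − T^{(k+1,t+1)}_n, and F^{(k,t)}_n := T^{(k,t)}_{n+2} − T^{(k,t+1)}_{n+1} + T^{(k+M,t+1)}_n − T^{(k+M,t)}_{n+1} + S^{(t)}. Then for all k ∈ ℤ, t ≥ 0 and all n in the valid index ranges, the nonautonomous ultradiscrete hungry Toda lattice equations hold: Q^{(k,t+1)}_n = min(D^{(k,t)}_n, Ẽ^{(k,t)}_n); E^{(k,t+1)}_n = min(F^{(k,t)}_n, Ẽ^{(k+M,t)}_n); D^{(k,t)}_{n+1} = D^{(k,t)}_n − Q^{(k,t+1)}_n + Q^{(k,t)}_{n+1}; F^{(k,t)}_{n+1} = F^{(k,t)}_n − E^{(k,t+1)}_n + E^{(k,t)}_{n+1};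 Ẽ^{(k+1,t)}_n = Ẽ^{(k,t)}_n − Q^{(k,t+1)}_n + Q^{(k,t)}_{n+1}; Ẽ^{(k,t)}_{n+1} = Ẽ^{(k+M,t)}_n − E^{(k,t+1)}_n + E^{(k,t)}_{n+1}; with boundary conditions D^{(k,t)}_0 = Q^{(k,t)}_0, F^{(k,t)}_0 = E^{(k,t)}_0 + max(0, S^{(t)} − Σ_{j=0}^{M−1} Q^{(k+j,t)}_0), and Ẽ^{(k,t)}_0 = E^{(k,t)}_0 + max(0, Σ_{j=0}^{M−1} Q^{(k+j,t)}_0 − S^{(t)}). -/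

import Mathlib

/-!
The tau function `T^{(k,t)}_n` is the least weight of a strictly increasing `n`-tuple of indices,
and every shift changes the weight of the `j`-th entry `x` by an antitone function of `x`: by
`W_x^{(k+j+1)} - W_x^{(k+j)} + Z_x / M` for `k ↦ k + 1`, by `Z_x` for `k ↦ k + M` (periodicity of
`W`), by `min (Z_x, S^{(t)})` for `t ↦ t + 1`, and by the sum of the first two for `j ↦ j + 1`.
The lattice equations are linear rearrangements of two tropical bilinear identities between tau
functions, one for the shifts `(k + 1, t + 1)` and one for `(k + M, t + 1)`; the case `n = 0` of
the second one gives the boundary conditions. Each identity is proved by exchanging entries of two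
minimizing tuples: their pointwise maximum and minimum cost nothing more because the shift weights
are antitone, and swapping their tails after a suitable cut only moves the nonnegative antitone
charge `max (Z - S^{(t)}, 0)` from one tuple to the other. Outside the lattice `T_n = +∞`, and an
equation containing such a term has `+∞` on both sides.
-/

open scoped Classical
open Finset

namespace UltradiscreteToda

section Auxiliary

@[norm_cast]
theorem _root_.EReal.coe_min (x y : ℝ) : ((min x y : ℝ) : EReal) = min (x : EReal) y :=
  EReal.coe_strictMono.monotone.map_min

@[norm_cast]
theorem _root_.EReal.coe_max (x y : ℝ) : ((max x y : ℝ) : EReal) = max (x : EReal) y :=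
  EReal.coe_strictMono.monotone.map_max

theorem top_add_max_zero (x : EReal) : ⊤ + max 0 x = ⊤ :=
  EReal.top_add_of_ne_bot (ne_bot_of_le_ne_bot EReal.zero_ne_bot (le_max_left _ _))

theorem eq_min_of_eq_min {a b c q x y : ℝ} (h : a = min b c) (hx : x - q = b - a)
    (hy : y - q = c - a) : q = min x y := by
  rw [show x = b + (q - a) by linarith, show y = c + (q - a) by linarith, min_add_add_right, ← h]
  ring

theorem sub_min_eq_max_zero (a b : ℝ) : a - min a b = max 0 (a - b) := by
  rcases le_total a b with h | h
  · rw [min_eq_left h, sub_self, max_eq_left (by linarith)]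
  · rw [min_eq_right h, max_eq_right (by linarith)]

theorem sub_min_eq_zero_or (a s : ℝ) : a - min a s = 0 ∨ min a s = s := by
  rcases min_choice a s with h | h
  · exact Or.inl (by rw [h, sub_self])
  · exact Or.inr h

theorem antitone_sub_min {α : Type*} [Preorder α] {Z : α → ℝ} (hZ : Antitone Z) (s : ℝ) :
    Antitone fun x => Z x - min (Z x) s := fun x y hxy => by
  have := hZ hxy
  rcases min_cases (Z x) s with ⟨hx, _⟩ | ⟨hx, _⟩ <;>
    rcases min_cases (Z y) s with ⟨hy, _⟩ | ⟨hy, _⟩ <;> simp only [hx, hy] <;> linarith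

theorem apply_max_add_apply_min {α β : Type*} [LinearOrder α] [AddCommMagma β] (g : α → β)
    (x y : α) : g (max x y) + g (min x y) = g x + g y := by
  rcases le_total x y with h | h
  · rw [max_eq_right h, min_eq_left h, add_comm]
  · rw [max_eq_left h, min_eq_right h]

end Auxiliary

section Sequences

variable {α : Type*} [LinearOrder α]

theorem strictMonoOn_Iio_ite {ρ σ : ℕ → α} {i n : ℕ} (hρ : StrictMonoOn ρ (Set.Iio i))
    (hσ : StrictMonoOn σ (Set.Ico i n)) (hjoin : ∀ j, j + 1 = i → i < n → ρ j < σ i) :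
    StrictMonoOn (fun j => if j < i then ρ j else σ j) (Set.Iio n) := by
  refine strictMonoOn_of_lt_add_one Set.ordConnected_Iio fun j _ _ hj => ?_
  have hj : j + 1 < n := hj
  rcases lt_trichotomy (j + 1) i with h | rfl | h
  · simp only [if_pos h, if_pos (Nat.lt_of_succ_lt h)]
    exact hρ (Set.mem_Iio.2 (by omega)) (Set.mem_Iio.2 h) (by omega)
  · simp only [if_pos (Nat.lt_succ_self j), lt_irrefl, if_false]
    exact hjoin j rfl hj
  · simp only [if_neg (show ¬ j < i by omega), if_neg (show ¬ j + 1 < i by omega)]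
    exact hσ ⟨by omega, by omega⟩ ⟨by omega, hj⟩ (by omega)

theorem _root_.StrictMonoOn.comp_succ {ρ : ℕ → α} {m : ℕ}
    (hρ : StrictMonoOn ρ (Set.Iio (m + 1))) : StrictMonoOn (fun j => ρ (j + 1)) (Set.Iio m) :=
  fun a ha b hb hab =>
    hρ (Set.mem_Iio.2 (by simp at ha; omega)) (Set.mem_Iio.2 (by simp at hb; omega)) (by omega)

theorem _root_.StrictMonoOn.max {β : Type*} [Preorder β] {s : Set β} {u v : β → α}
    (hu : StrictMonoOn u s) (hv : StrictMonoOn v s) :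
    StrictMonoOn (fun j => max (u j) (v j)) s :=
  fun _ ha _ hb hab => max_lt_max (hu ha hb hab) (hv ha hb hab)

theorem _root_.StrictMonoOn.min {β : Type*} [Preorder β] {s : Set β} {u v : β → α}
    (hu : StrictMonoOn u s) (hv : StrictMonoOn v s) :
    StrictMonoOn (fun j => min (u j) (v j)) s :=
  fun _ ha _ hb hab => min_lt_min (hu ha hb hab) (hv ha hb hab)

def seqCons (a : α) (ρ : ℕ → α) : ℕ → α
  | 0 => a
  | j + 1 => ρ j

theorem strictMonoOn_seqCons {a : α} {ρ : ℕ → α} {m : ℕ} (hρ : StrictMonoOn ρ (Set.Iio m))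
    (ha : 0 < m → a < ρ 0) : StrictMonoOn (seqCons a ρ) (Set.Iio (m + 1)) := by
  refine strictMonoOn_of_lt_add_one Set.ordConnected_Iio fun j _ _ hj => ?_
  have hj : j + 1 < m + 1 := hj
  cases j with
  | zero => exact ha (by omega)
  | succ j => exact hρ (Set.mem_Iio.2 (by omega)) (Set.mem_Iio.2 (by omega)) (by omega)

end Sequences

theorem exists_least_tail (P : ℕ → Prop) (m : ℕ) :
    ∃ i ≤ m, (∀ q, i ≤ q → q < m → P q) ∧ ∀ q, q + 1 = i → ¬ P q := by
  have hex : ∃ i, i ≤ m ∧ ∀ q, i ≤ q → q < m → P q :=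
    ⟨m, le_rfl, fun q h1 h2 => absurd h2 (by omega)⟩
  obtain ⟨him, htail⟩ := Nat.find_spec hex
  refine ⟨_, him, htail, fun q hq hPq => Nat.find_min hex (show q < Nat.find hex by omega)
    ⟨by omega, fun r hr hrm => ?_⟩⟩
  rcases eq_or_lt_of_le hr with rfl | hr
  · exact hPq
  · exact htail r (by omega) hrm

section Weights

variable {α : Type*}

def weight (w : ℕ → α → ℝ) (n : ℕ) (ρ : ℕ → α) : ℝ := ∑ j ∈ range n, w j (ρ j)

theorem weight_add (a b : ℕ → α → ℝ) (n : ℕ) (ρ : ℕ → α) :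
    weight (fun j x => a j x + b j x) n ρ = weight a n ρ + weight b n ρ :=
  sum_add_distrib

theorem weight_succ' (w : ℕ → α → ℝ) (m : ℕ) (ρ : ℕ → α) :
    weight w (m + 1) ρ = w 0 (ρ 0) + weight (fun j => w (j + 1)) m (fun j => ρ (j + 1)) := by
  rw [weight, sum_range_succ', add_comm]; rfl

theorem weight_seqCons (w : ℕ → α → ℝ) (m : ℕ) (a : α) (ρ : ℕ → α) :
    weight w (m + 1) (seqCons a ρ) = w 0 a + weight (fun j => w (j + 1)) m ρ :=
  weight_succ' w m _

theorem weight_max_add_weight_min_le [LinearOrder α] {a b c e : ℕ → α → ℝ}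
    (h : ∀ j x y, a j (max x y) + b j (min x y) ≤ c j x + e j y) (n : ℕ) (u v : ℕ → α) :
    weight a n (fun j => max (u j) (v j)) + weight b n (fun j => min (u j) (v j))
      ≤ weight c n u + weight e n v := by
  simp only [weight, ← sum_add_distrib]
  exact sum_le_sum fun j _ => h j (u j) (v j)

theorem weight_ite_add_weight_ite (a : ℕ → α → ℝ) (L S : ℕ → α) {i m : ℕ} (hi : i ≤ m) :
    weight a (m + 1) (fun j => if j < i then S j else L j)
        + weight a m (fun j => if j < i then L j else S j)
      = weight a (m + 1) L + weight a m S := by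
  simp only [weight, sum_range_succ, if_neg (show ¬ m < i by omega)]
  have hswap : ∑ j ∈ range m,
        (a j (if j < i then S j else L j) + a j (if j < i then L j else S j))
      = ∑ j ∈ range m, (a j (L j) + a j (S j)) :=
    sum_congr rfl fun j _ => by split_ifs <;> ring
  rw [sum_add_distrib, sum_add_distrib] at hswap
  linarith

theorem sum_ite_eq_sum_add_of_eq_succ (g : α → ℝ) {L S : ℕ → α} {i m : ℕ} (hi : i ≤ m)
    (htail : ∀ q, i ≤ q → q < m → S q = L (q + 1)) :
    ∑ j ∈ range (m + 1), g (if j < i then S j else L j)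
      = ∑ j ∈ range m, g (S j) + g (L i) := by
  have hhead : ∑ j ∈ range i, g (if j < i then S j else L j) = ∑ j ∈ range i, g (S j) :=
    sum_congr rfl fun j hj => by rw [if_pos (mem_range.1 hj)]
  have htl : ∑ j ∈ Ico i m, g (if j + 1 < i then S (j + 1) else L (j + 1))
      = ∑ j ∈ Ico i m, g (S j) :=
    sum_congr rfl fun j hj => by
      obtain ⟨h1, h2⟩ := mem_Ico.1 hj
      rw [if_neg (by omega), htail j h1 h2]
  rw [← sum_range_add_sum_Ico _ (show i ≤ m + 1 by omega), ← sum_range_add_sum_Ico _ hi,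
    sum_eq_sum_Ico_succ_bot (show i < m + 1 by omega), if_neg (lt_irrefl i),
    ← sum_Ico_add' (fun j => g (if j < i then S j else L j)), hhead, htl]
  ring

end Weights

section Exchange

variable {α : Type*} [LinearOrder α]

theorem exists_swap_tails_le (a : ℕ → α → ℝ) {φ : α → ℝ} (hφ : Antitone φ)
    (hφ0 : ∀ x, 0 ≤ φ x) {L S : ℕ → α} {m : ℕ} (hL : StrictMonoOn L (Set.Iio (m + 1)))
    (hS : StrictMonoOn S (Set.Iio m)) :
    ∃ L' S', StrictMonoOn L' (Set.Iio (m + 1)) ∧ StrictMonoOn S' (Set.Iio m) ∧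
      (∀ j < m, L j ≤ S' j) ∧
      weight a (m + 1) L' + weight (fun j x => a j x + φ x) m S'
        ≤ weight (fun j x => a j x + φ x) (m + 1) L + weight a m S := by
  obtain ⟨i, him, htail, hhead⟩ := exists_least_tail (fun q => L q ≤ S q) m
  have hLS : ∀ j < m, L j ≤ if j < i then L j else S j := fun j hj => by
    split_ifs with h
    · exact le_rfl
    · exact htail j (not_lt.1 h) hj
  refine ⟨_, _, strictMonoOn_Iio_ite (hS.mono fun j hj => lt_of_lt_of_le hj him)
      (hL.mono fun j hj => hj.2) fun j hj _ => ?_,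
    strictMonoOn_Iio_ite (hL.mono fun j (hj : j < i) => by simp; omega)
      (hS.mono fun j hj => hj.2) fun j hj hi => ?_, hLS, ?_⟩
  · exact (not_le.1 (hhead j hj)).trans (hL (by simp; omega) (by simp; omega) (by omega))
  · exact (hL (by simp; omega) (by simp; omega) (by omega)).trans_le (htail i le_rfl hi)
  · have hφS : weight (fun _ => φ) m (fun j => if j < i then L j else S j)
        ≤ weight (fun _ => φ) (m + 1) L := by
      rw [weight, weight, sum_range_succ]
      have := sum_le_sum fun j hj => hφ (hLS j (mem_range.1 hj))
      linarith [hφ0 (L m)]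
    rw [weight_add, weight_add]
    linarith [weight_ite_add_weight_ite a L S him]

theorem swap_tails_of_eq_succ (a : ℕ → α → ℝ) (φ : α → ℝ) {L S : ℕ → α} {m i : ℕ}
    (hL : StrictMonoOn L (Set.Iio (m + 1))) (hS : StrictMonoOn S (Set.Iio m)) (hi : i ≤ m)
    (hjoin : ∀ q, q + 1 = i → S q < L i) (htail : ∀ q, i ≤ q → q < m → S q = L (q + 1))
    (hφ : φ (L i) = 0) :
    StrictMonoOn (fun j => if j < i then S j else L j) (Set.Iio (m + 1)) ∧
      StrictMonoOn (fun j => if j < i then L j else S j) (Set.Iio m) ∧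
      weight (fun j x => a j x + φ x) (m + 1) (fun j => if j < i then S j else L j)
          + weight a m (fun j => if j < i then L j else S j)
        = weight a (m + 1) L + weight (fun j x => a j x + φ x) m S := by
  refine ⟨strictMonoOn_Iio_ite (hS.mono fun j hj => lt_of_lt_of_le hj hi)
      (hL.mono fun j hj => hj.2) fun j hj _ => hjoin j hj,
    strictMonoOn_Iio_ite (hL.mono fun j (hj : j < i) => by simp; omega)
      (hS.mono fun j hj => hj.2) fun j hj hi => ?_, ?_⟩
  · rw [htail i le_rfl hi]
    exact hL (by simp; omega) (by simp; omega) (by omega)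
  · have hφS : weight (fun _ => φ) (m + 1) (fun j => if j < i then S j else L j)
        = weight (fun _ => φ) m S := by
      rw [weight, weight, sum_ite_eq_sum_add_of_eq_succ φ hi htail, hφ, add_zero]
    rw [weight_add, weight_add]
    linarith [weight_ite_add_weight_ite a L S hi]

end Exchange

section MinWeight

variable {N : ℕ}

/-- The value is `0` when there is no strictly increasing tuple, i.e. for `n > N`. -/
noncomputable def minWeight (w : ℕ → Fin N → ℝ) (n : ℕ) : ℝ :=
  if h : (univ.filter fun r : Fin n → Fin N => StrictMono r).Nonempty then
    (univ.filter fun r : Fin n → Fin N => StrictMono r).inf' h fun r => ∑ j : Fin n, w j (r j)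
  else 0

theorem le_of_strictMonoOn_Iio {ρ : ℕ → Fin N} {n : ℕ} (hρ : StrictMonoOn ρ (Set.Iio n)) :
    n ≤ N := by
  simpa using Fintype.card_le_of_injective (fun j : Fin n => ρ j) fun a b hab =>
    Fin.ext (hρ.injOn a.isLt b.isLt hab)

theorem nonempty_strictMono {n : ℕ} (hn : n ≤ N) :
    (univ.filter fun r : Fin n → Fin N => StrictMono r).Nonempty :=
  ⟨Fin.castLE hn, mem_filter.2 ⟨mem_univ _, Fin.strictMono_castLE hn⟩⟩

theorem minWeight_le_weight (w : ℕ → Fin N → ℝ) {n : ℕ} {ρ : ℕ → Fin N}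
    (hρ : StrictMonoOn ρ (Set.Iio n)) : minWeight w n ≤ weight w n ρ := by
  rw [minWeight, dif_pos (nonempty_strictMono (le_of_strictMonoOn_Iio hρ)), weight,
    ← Fin.sum_univ_eq_sum_range (fun j => w j (ρ j))]
  exact inf'_le _ (mem_filter.2 ⟨mem_univ _, fun a b hab => hρ a.isLt b.isLt hab⟩)

theorem exists_weight_eq_minWeight (w : ℕ → Fin N → ℝ) (hN : 0 < N) {n : ℕ} (hn : n ≤ N) :
    ∃ ρ : ℕ → Fin N, StrictMonoOn ρ (Set.Iio n) ∧ weight w n ρ = minWeight w n := by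
  obtain ⟨r, hr, hval⟩ := exists_mem_eq_inf' (nonempty_strictMono hn)
    fun r : Fin n → Fin N => ∑ j : Fin n, w j (r j)
  refine ⟨fun j => if h : j < n then r ⟨j, h⟩ else ⟨0, hN⟩, fun a ha b hb hab => ?_, ?_⟩
  · simp only [dif_pos (show a < n from ha), dif_pos (show b < n from hb)]
    exact (mem_filter.1 hr).2 (show (⟨a, ha⟩ : Fin n) < ⟨b, hb⟩ from hab)
  · rw [minWeight, dif_pos (nonempty_strictMono hn), hval, weight,
      ← Fin.sum_univ_eq_sum_range (fun j => w j (if h : j < n then r ⟨j, h⟩ else ⟨0, hN⟩))]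
    exact sum_congr rfl fun j _ => by rw [dif_pos j.isLt]

theorem minWeight_zero (w : ℕ → Fin N → ℝ) : minWeight w 0 = 0 := by
  rw [minWeight, dif_pos (nonempty_strictMono (Nat.zero_le N))]
  simp

theorem inf_strictMono_eq_ite (w : ℕ → Fin N → ℝ) (n : ℕ) :
    (univ.filter fun r : Fin n → Fin N => StrictMono r).inf
        (fun r => ((∑ j : Fin n, w j (r j) : ℝ) : EReal))
      = if n ≤ N then (minWeight w n : EReal) else ⊤ := by
  split_ifs with h
  · rw [minWeight, dif_pos (nonempty_strictMono h), ← inf'_eq_inf (nonempty_strictMono h)]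
    exact (apply_inf'_eq_inf'_comp _ _ fun _ _ => EReal.coe_min _ _).symm
  · rw [filter_eq_empty_iff.2 fun r _ hr => h ?_, inf_empty]
    simpa using Fintype.card_le_of_injective r hr.injective

end MinWeight

section Bilinear

/- With `f` the weight of `T^{(k,t)}`, `d j = todaStep M Z W (k + j)` and `s = S t`, the weights
`f + d`, `f + min Z s`, `f + d + min Z s`, `f + Z` and `f + Z + min Z s` are those of
`T^{(k+1,t)}`, `T^{(k,t+1)}`, `T^{(k+1,t+1)}`, `T^{(k+M,t)}` and `T^{(k+M,t+1)}`. -/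
variable {N : ℕ} {Z : Fin N → ℝ} {d f : ℕ → Fin N → ℝ} {s : ℝ}

theorem minWeight_bilinear₁_le_left (hZ : Antitone Z) (hd : ∀ j, Antitone (d j)) (hN : 0 < N)
    {n : ℕ} (hn : n ≤ N) :
    minWeight (fun j x => f j x + d j x + min (Z x) s) n + minWeight f n
      ≤ minWeight (fun j x => f j x + d j x) n
        + minWeight (fun j x => f j x + min (Z x) s) n := by
  obtain ⟨u, hu, hu'⟩ := exists_weight_eq_minWeight (fun j x => f j x + d j x) hN hn
  obtain ⟨v, hv, hv'⟩ := exists_weight_eq_minWeight (fun j x => f j x + min (Z x) s) hN hn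
  have hlat := weight_max_add_weight_min_le (a := fun j x => f j x + d j x + min (Z x) s)
    (b := f) (c := fun j x => f j x + d j x) (e := fun j x => f j x + min (Z x) s)
    (fun j x y => by
      linarith [apply_max_add_apply_min (f j) x y, hd j (le_max_left x y),
        min_le_min_right s (hZ (le_max_right x y))]) n u v
  linarith [minWeight_le_weight (fun j x => f j x + d j x + min (Z x) s) (hu.max hv),
    minWeight_le_weight f (hu.min hv)]

theorem minWeight_bilinear₁_le_right (hZ : Antitone Z)
    (hf : ∀ j x, f (j + 1) x = f j x + d j x + Z x) (hN : 0 < N) {n : ℕ} (hn : n + 2 ≤ N) :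
    minWeight (fun j x => f j x + d j x + min (Z x) s) (n + 1) + minWeight f (n + 1)
      ≤ minWeight f (n + 2) + minWeight (fun j x => f j x + d j x + min (Z x) s) n := by
  -- The tail of a tuple for `f` is a tuple for `f + d + min Z s` carrying the charge
  -- `Z - min Z s`, so the tail exchange applies to it.
  have hf' : (fun j => f (j + 1))
      = fun j x => f j x + d j x + min (Z x) s + (Z x - min (Z x) s) := by
    funext j x; rw [hf]; ring
  obtain ⟨w, hw, hw'⟩ := exists_weight_eq_minWeight f hN hn
  obtain ⟨σ, hσ, hσ'⟩ := exists_weight_eq_minWeight (fun j x => f j x + d j x + min (Z x) s) hN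
    (show n ≤ N by omega)
  obtain ⟨L', S', hL', hS', hLS, hle⟩ :=
    exists_swap_tails_le (fun j x => f j x + d j x + min (Z x) s) (antitone_sub_min hZ s)
      (fun x => sub_nonneg.2 (min_le_left _ s)) hw.comp_succ hσ
  have hb : StrictMonoOn (seqCons (w 0) S') (Set.Iio (n + 1)) :=
    strictMonoOn_seqCons hS' fun hn0 =>
      (hw (by simp) (by simp; omega) zero_lt_one).trans_le (hLS 0 hn0)
  have hbw := weight_seqCons f n (w 0) S'
  have hww := weight_succ' f (n + 1) w
  rw [hf'] at hbw hww
  linarith [minWeight_le_weight (fun j x => f j x + d j x + min (Z x) s) hL',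
    minWeight_le_weight f hb]

theorem exists_minimizers_le (hZ : Antitone Z) (hd : ∀ j, Antitone (d j)) (hN : 0 < N)
    {n : ℕ} (hn : n ≤ N) :
    ∃ u v : ℕ → Fin N, StrictMonoOn u (Set.Iio n) ∧ StrictMonoOn v (Set.Iio n) ∧
      weight (fun j x => f j x + d j x + min (Z x) s) n u
        = minWeight (fun j x => f j x + d j x + min (Z x) s) n ∧
      weight f n v = minWeight f n ∧ ∀ j, v j ≤ u j := by
  obtain ⟨u, hu, hu'⟩ :=
    exists_weight_eq_minWeight (fun j x => f j x + d j x + min (Z x) s) hN hn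
  obtain ⟨v, hv, hv'⟩ := exists_weight_eq_minWeight f hN hn
  have hlat := weight_max_add_weight_min_le (a := fun j x => f j x + d j x + min (Z x) s)
    (b := f) (c := fun j x => f j x + d j x + min (Z x) s) (e := f)
    (fun j x y => by
      linarith [apply_max_add_apply_min (f j) x y, hd j (le_max_left x y),
        min_le_min_right s (hZ (le_max_left x y))]) n u v
  have h1 := minWeight_le_weight (fun j x => f j x + d j x + min (Z x) s) (hu.max hv)
  have h2 := minWeight_le_weight f (hu.min hv)
  exact ⟨_, _, hu.max hv, hu.min hv, by linarith, by linarith, fun j => min_le_max⟩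

theorem minWeight_bilinear₁_ge_right_of_cut (hf : ∀ j x, f (j + 1) x = f j x + d j x + Z x)
    {n i : ℕ} {u v : ℕ → Fin N} (hu : StrictMonoOn u (Set.Iio (n + 1)))
    (hv : StrictMonoOn v (Set.Iio (n + 1)))
    (hu' : weight (fun j x => f j x + d j x + min (Z x) s) (n + 1) u
      = minWeight (fun j x => f j x + d j x + min (Z x) s) (n + 1))
    (hv' : weight f (n + 1) v = minWeight f (n + 1)) (hi : i ≤ n) (hvu : v i < u i)
    (htail : ∀ q, i < q → q ≤ n → v q = u q) (hφ : Z (u i) - min (Z (u i)) s = 0) :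
    n + 2 ≤ N ∧ minWeight f (n + 2) + minWeight (fun j x => f j x + d j x + min (Z x) s) n
      ≤ minWeight (fun j x => f j x + d j x + min (Z x) s) (n + 1) + minWeight f (n + 1) := by
  have hf' : (fun j => f (j + 1))
      = fun j x => f j x + d j x + min (Z x) s + (Z x - min (Z x) s) := by
    funext j x; rw [hf]; ring
  obtain ⟨hSL, hLS, hw⟩ := swap_tails_of_eq_succ (fun j x => f j x + d j x + min (Z x) s)
    (fun x => Z x - min (Z x) s) hu hv.comp_succ hi (fun q hq => by subst hq; exact hvu)
    (fun q h1 h2 => htail (q + 1) (by omega) (by omega)) hφ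
  have hw' : StrictMonoOn (seqCons (v 0) fun j => if j < i then v (j + 1) else u j)
      (Set.Iio (n + 2)) :=
    strictMonoOn_seqCons hSL fun _ => by
      split_ifs with h
      · exact hv (by simp) (by simp; omega) zero_lt_one
      · obtain rfl : i = 0 := by omega
        exact hvu
  have hbw := weight_seqCons f (n + 1) (v 0) fun j => if j < i then v (j + 1) else u j
  have hvv := weight_succ' f n v
  rw [hf'] at hbw hvv
  refine ⟨le_of_strictMonoOn_Iio hw', ?_⟩
  linarith [minWeight_le_weight f hw',
    minWeight_le_weight (fun j x => f j x + d j x + min (Z x) s) hLS]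

theorem minWeight_bilinear₁_ge (hZ : Antitone Z) (hd : ∀ j, Antitone (d j))
    (hf : ∀ j x, f (j + 1) x = f j x + d j x + Z x) (hN : 0 < N) {n : ℕ} (hn : n + 1 ≤ N) :
    minWeight (fun j x => f j x + d j x) (n + 1)
          + minWeight (fun j x => f j x + min (Z x) s) (n + 1)
        ≤ minWeight (fun j x => f j x + d j x + min (Z x) s) (n + 1) + minWeight f (n + 1) ∨
      n + 2 ≤ N ∧ minWeight f (n + 2) + minWeight (fun j x => f j x + d j x + min (Z x) s) n
        ≤ minWeight (fun j x => f j x + d j x + min (Z x) s) (n + 1) + minWeight f (n + 1) := by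
  obtain ⟨u, v, hu, hv, hu', hv', hvu⟩ := exists_minimizers_le (f := f) (s := s) hZ hd hN hn
  have hleft : (∀ j < n + 1, min (Z (v j)) s ≤ min (Z (u j)) s) →
      minWeight (fun j x => f j x + d j x) (n + 1)
          + minWeight (fun j x => f j x + min (Z x) s) (n + 1)
        ≤ minWeight (fun j x => f j x + d j x + min (Z x) s) (n + 1)
          + minWeight f (n + 1) := fun h => by
    have : weight (fun j x => f j x + d j x) (n + 1) u
          + weight (fun j x => f j x + min (Z x) s) (n + 1) v
        ≤ weight (fun j x => f j x + d j x + min (Z x) s) (n + 1) u + weight f (n + 1) v := by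
      simp only [weight, ← sum_add_distrib]
      exact sum_le_sum fun j hj => by linarith [h j (mem_range.1 hj)]
    linarith [minWeight_le_weight (fun j x => f j x + d j x) hu,
      minWeight_le_weight (fun j x => f j x + min (Z x) s) hv]
  obtain ⟨_ | i, hi, htail, hhead⟩ := exists_least_tail (fun q => u q = v q) (n + 1)
  · exact Or.inl (hleft fun j hj => by rw [htail j (Nat.zero_le _) hj])
  have hlt : v i < u i := lt_of_le_of_ne (hvu i) (Ne.symm (hhead i rfl))
  rcases sub_min_eq_zero_or (Z (u i)) s with hφ | hs
  · exact Or.inr (minWeight_bilinear₁_ge_right_of_cut hf hu hv hu' hv' (by omega) hlt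
      (fun q h1 h2 => (htail q h1 (by omega)).symm) hφ)
  refine Or.inl (hleft fun j hj => ?_)
  rcases le_or_gt j i with hji | hij
  · have hsu : s ≤ Z (u j) :=
      (min_eq_right_iff.1 hs).trans (hZ (hu.monotoneOn (by simp; omega) (by simp; omega) hji))
    rw [min_eq_right hsu]
    exact min_le_right _ _
  · rw [htail j hij hj]

theorem minWeight_bilinear₁ (hZ : Antitone Z) (hd : ∀ j, Antitone (d j))
    (hf : ∀ j x, f (j + 1) x = f j x + d j x + Z x) (hN : 0 < N) {n : ℕ} (hn : n + 2 ≤ N) :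
    minWeight (fun j x => f j x + d j x + min (Z x) s) (n + 1) + minWeight f (n + 1)
      = min (minWeight (fun j x => f j x + d j x) (n + 1)
              + minWeight (fun j x => f j x + min (Z x) s) (n + 1))
          (minWeight f (n + 2) + minWeight (fun j x => f j x + d j x + min (Z x) s) n) := by
  refine le_antisymm (le_min (minWeight_bilinear₁_le_left hZ hd hN (by omega))
    (minWeight_bilinear₁_le_right hZ hf hN hn)) ?_
  rcases minWeight_bilinear₁_ge hZ hd hf hN (show n + 1 ≤ N by omega) with h | ⟨_, h⟩
  · exact (min_le_left _ _).trans h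
  · exact (min_le_right _ _).trans h

theorem minWeight_bilinear₁_of_eq (hZ : Antitone Z) (hd : ∀ j, Antitone (d j))
    (hf : ∀ j x, f (j + 1) x = f j x + d j x + Z x) (hN : 0 < N) {n : ℕ} (hn : n + 1 = N) :
    minWeight (fun j x => f j x + d j x + min (Z x) s) (n + 1) + minWeight f (n + 1)
      = minWeight (fun j x => f j x + d j x) (n + 1)
        + minWeight (fun j x => f j x + min (Z x) s) (n + 1) := by
  refine le_antisymm (minWeight_bilinear₁_le_left hZ hd hN (by omega)) ?_
  rcases minWeight_bilinear₁_ge hZ hd hf hN (show n + 1 ≤ N by omega) with h | ⟨h, _⟩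
  · exact h
  · omega

theorem minWeight_bilinear₂_le_left (hZ : Antitone Z) (hd : ∀ j, Antitone (d j))
    (hf : ∀ j x, f (j + 1) x = f j x + d j x + Z x) (hN : 0 < N) {m : ℕ} (hm : m + 1 ≤ N) :
    minWeight (fun j x => f j x + min (Z x) s) (m + 1) + minWeight (fun j x => f j x + Z x) m
      ≤ minWeight f (m + 1) + minWeight (fun j x => f j x + Z x + min (Z x) s) m + s := by
  obtain ⟨x, hx, hx'⟩ := exists_weight_eq_minWeight f hN hm
  obtain ⟨y, hy, hy'⟩ := exists_weight_eq_minWeight (fun j x => f j x + Z x + min (Z x) s) hN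
    (show m ≤ N by omega)
  have hU : StrictMonoOn (seqCons (x 0) fun j => max (x (j + 1)) (y j)) (Set.Iio (m + 1)) :=
    strictMonoOn_seqCons (hx.comp_succ.max hy) fun hm0 =>
      (hx (by simp) (by simp; omega) zero_lt_one).trans_le (le_max_left _ _)
  have hlat := weight_max_add_weight_min_le (a := fun j x => f (j + 1) x + min (Z x) s)
    (b := fun j x => f j x + Z x) (c := fun j => f (j + 1))
    (e := fun j x => f j x + Z x + min (Z x) s)
    (fun j a b => by
      simp only [hf]
      linarith [apply_max_add_apply_min (f j) a b, apply_max_add_apply_min Z a b,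
        hd j (le_max_left a b), min_le_min_right s (hZ (le_max_right a b))])
    m (fun j => x (j + 1)) y
  have hUw :=
    weight_seqCons (fun j x => f j x + min (Z x) s) m (x 0) fun j => max (x (j + 1)) (y j)
  have hxw := weight_succ' f m x
  linarith [minWeight_le_weight (fun j x => f j x + min (Z x) s) hU,
    minWeight_le_weight (fun j x => f j x + Z x) (hx.comp_succ.min hy), min_le_right (Z (x 0)) s]

theorem minWeight_bilinear₂_le_right (hZ : Antitone Z) (hN : 0 < N) {m : ℕ} (hm : m + 1 ≤ N) :
    minWeight (fun j x => f j x + min (Z x) s) (m + 1) + minWeight (fun j x => f j x + Z x) m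
      ≤ minWeight (fun j x => f j x + Z x) (m + 1)
        + minWeight (fun j x => f j x + min (Z x) s) m := by
  have hG : (fun j x => f j x + Z x) = fun j x => f j x + min (Z x) s + (Z x - min (Z x) s) := by
    funext j x; ring
  obtain ⟨x, hx, hx'⟩ := exists_weight_eq_minWeight (fun j x => f j x + Z x) hN hm
  obtain ⟨y, hy, hy'⟩ := exists_weight_eq_minWeight (fun j x => f j x + min (Z x) s) hN
    (show m ≤ N by omega)
  obtain ⟨L', S', hL', hS', -, hle⟩ := exists_swap_tails_le (fun j x => f j x + min (Z x) s)
    (antitone_sub_min hZ s) (fun x => sub_nonneg.2 (min_le_left _ s)) hx hy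
  rw [← hG] at hle
  linarith [minWeight_le_weight (fun j x => f j x + min (Z x) s) hL',
    minWeight_le_weight (fun j x => f j x + Z x) hS']

theorem exists_minimizers_interlace (hZ : Antitone Z) (hd : ∀ j, Antitone (d j))
    (hf : ∀ j x, f (j + 1) x = f j x + d j x + Z x) (hN : 0 < N) {m : ℕ} (hm : m + 1 ≤ N) :
    ∃ u v : ℕ → Fin N, StrictMonoOn u (Set.Iio (m + 1)) ∧ StrictMonoOn v (Set.Iio m) ∧
      weight (fun j x => f j x + min (Z x) s) (m + 1) u
        = minWeight (fun j x => f j x + min (Z x) s) (m + 1) ∧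
      weight (fun j x => f j x + Z x) m v = minWeight (fun j x => f j x + Z x) m ∧
      ∀ j, v j ≤ u (j + 1) := by
  obtain ⟨u, hu, hu'⟩ := exists_weight_eq_minWeight (fun j x => f j x + min (Z x) s) hN hm
  obtain ⟨v, hv, hv'⟩ :=
    exists_weight_eq_minWeight (fun j x => f j x + Z x) hN (show m ≤ N by omega)
  have hU : StrictMonoOn (seqCons (u 0) fun j => max (u (j + 1)) (v j)) (Set.Iio (m + 1)) :=
    strictMonoOn_seqCons (hu.comp_succ.max hv) fun hm0 =>
      (hu (by simp) (by simp; omega) zero_lt_one).trans_le (le_max_left _ _)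
  have hlat := weight_max_add_weight_min_le (a := fun j x => f (j + 1) x + min (Z x) s)
    (b := fun j x => f j x + Z x) (c := fun j x => f (j + 1) x + min (Z x) s)
    (e := fun j x => f j x + Z x)
    (fun j a b => by
      simp only [hf]
      linarith [apply_max_add_apply_min (f j) a b, apply_max_add_apply_min Z a b,
        hd j (le_max_left a b), min_le_min_right s (hZ (le_max_left a b))])
    m (fun j => u (j + 1)) v
  have hUw :=
    weight_seqCons (fun j x => f j x + min (Z x) s) m (u 0) fun j => max (u (j + 1)) (v j)
  have huw := weight_succ' (fun j x => f j x + min (Z x) s) m u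
  have h1 := minWeight_le_weight (fun j x => f j x + min (Z x) s) hU
  have h2 := minWeight_le_weight (fun j x => f j x + Z x) (hu.comp_succ.min hv)
  exact ⟨_, _, hU, hu.comp_succ.min hv, by linarith, by linarith, fun j => min_le_max⟩

theorem minWeight_bilinear₂_ge (hZ : Antitone Z) (hd : ∀ j, Antitone (d j))
    (hf : ∀ j x, f (j + 1) x = f j x + d j x + Z x) (hN : 0 < N) {m : ℕ} (hm : m + 1 ≤ N) :
    minWeight f (m + 1) + minWeight (fun j x => f j x + Z x + min (Z x) s) m + s
        ≤ minWeight (fun j x => f j x + min (Z x) s) (m + 1)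
          + minWeight (fun j x => f j x + Z x) m ∨
      minWeight (fun j x => f j x + Z x) (m + 1) + minWeight (fun j x => f j x + min (Z x) s) m
        ≤ minWeight (fun j x => f j x + min (Z x) s) (m + 1)
          + minWeight (fun j x => f j x + Z x) m := by
  obtain ⟨u, v, hu, hv, hu', hv', hvu⟩ := exists_minimizers_interlace (s := s) hZ hd hf hN hm
  obtain ⟨i, him, htail, hhead⟩ := exists_least_tail (fun q => v q = u (q + 1)) m
  rcases sub_min_eq_zero_or (Z (u i)) s with hφ | hs
  · have hG : (fun j x => f j x + Z x)
        = fun j x => f j x + min (Z x) s + (Z x - min (Z x) s) := by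
      funext j x; ring
    obtain ⟨hSL, hLS, hw⟩ := swap_tails_of_eq_succ (fun j x => f j x + min (Z x) s)
      (fun x => Z x - min (Z x) s) hu hv him
      (fun q hq => by subst hq; exact lt_of_le_of_ne (hvu q) (hhead q rfl)) htail hφ
    rw [← hG] at hw
    refine Or.inr ?_
    linarith [minWeight_le_weight (fun j x => f j x + Z x) hSL,
      minWeight_le_weight (fun j x => f j x + min (Z x) s) hLS]
  refine Or.inl ?_
  -- Up to the cut `min (Z ∘ u) s = s`, and after it `v` is `u` shifted by one.
  have hsplit := sum_ite_eq_sum_add_of_eq_succ (fun x => min (Z x) s)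
    (S := fun j => if j < i then u j else v j) him
    (fun q h1 _ => by rw [if_neg (by omega)]; exact htail q h1 (by omega))
  have hu_eq : ∑ j ∈ range (m + 1), min (Z (if j < i then (if j < i then u j else v j) else u j)) s
      = ∑ j ∈ range (m + 1), min (Z (u j)) s :=
    sum_congr rfl fun j _ => by split_ifs <;> rfl
  rw [hu_eq, hs] at hsplit
  have hle : ∑ j ∈ range m, min (Z (v j)) s
      ≤ ∑ j ∈ range m, min (Z (if j < i then u j else v j)) s :=
    sum_le_sum fun j hj => by
      split_ifs with hji
      · have hsu : s ≤ Z (u j) := (min_eq_right_iff.1 hs).trans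
          (hZ (hu.monotoneOn (by simp; omega) (by simp; omega) hji.le))
        rw [min_eq_right hsu]
        exact min_le_right _ _
      · exact le_rfl
  have hPu := weight_add f (fun _ x => min (Z x) s) (m + 1) u
  have hGv := weight_add (fun j x => f j x + Z x) (fun _ x => min (Z x) s) m v
  have h1 := minWeight_le_weight f hu
  have h2 := minWeight_le_weight (fun j x => f j x + Z x + min (Z x) s) hv
  simp only [weight] at hPu hGv hu' hv' h1 h2
  linarith

theorem minWeight_bilinear₂ (hZ : Antitone Z) (hd : ∀ j, Antitone (d j))
    (hf : ∀ j x, f (j + 1) x = f j x + d j x + Z x) (hN : 0 < N) {m : ℕ} (hm : m + 1 ≤ N) :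
    minWeight (fun j x => f j x + min (Z x) s) (m + 1) + minWeight (fun j x => f j x + Z x) m
      = min (minWeight f (m + 1) + minWeight (fun j x => f j x + Z x + min (Z x) s) m + s)
          (minWeight (fun j x => f j x + Z x) (m + 1)
            + minWeight (fun j x => f j x + min (Z x) s) m) := by
  refine le_antisymm (le_min (minWeight_bilinear₂_le_left hZ hd hf hN hm)
    (minWeight_bilinear₂_le_right hZ hN hm)) ?_
  rcases minWeight_bilinear₂_ge hZ hd hf hN hm with h | h
  · exact (min_le_left _ _).trans h
  · exact (min_le_right _ _).trans h

end Bilinear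

section Toda

variable {N : ℕ} (M : ℕ) (Z : Fin N → ℝ) (W : Fin N → ℤ → ℝ) (S : ℕ → ℝ)

noncomputable def todaWeight (k : ℤ) (t j : ℕ) (x : Fin N) : ℝ :=
  W x (k + (j : ℤ)) + ((k + (M + 1) * (j : ℤ) : ℤ) : ℝ) / (M : ℝ) * Z x
    + ∑ τ ∈ range t, min (Z x) (S τ)

noncomputable def todaStep (m : ℤ) (x : Fin N) : ℝ := W x (m + 1) - W x m + Z x / M

noncomputable def tau (k : ℤ) (t n : ℕ) : ℝ := minWeight (todaWeight M Z W S k t) n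

noncomputable def tauE (k : ℤ) (t n : ℕ) : EReal :=
  if n ≤ N then (tau M Z W S k t n : EReal) else ⊤

local notation "τ" => tau M Z W S
local notation "𝒯" => tauE M Z W S

theorem todaWeight_succ_time (k : ℤ) (t : ℕ) :
    todaWeight M Z W S k (t + 1) = fun j x => todaWeight M Z W S k t j x + min (Z x) (S t) := by
  funext j x
  rw [todaWeight, todaWeight, sum_range_succ]
  ring

theorem todaWeight_add_one (k : ℤ) (t : ℕ) :
    todaWeight M Z W S (k + 1) t
      = fun j x => todaWeight M Z W S k t j x + todaStep M Z W (k + j) x := by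
  funext j x
  simp only [todaWeight, todaStep]
  rw [show k + 1 + (j : ℤ) = k + j + 1 by ring]
  push_cast
  ring

theorem todaWeight_add_period (hM : 0 < M)
    (hWper : ∀ (r : Fin N) (m : ℤ), W r (m + M) = W r m) (k : ℤ) (t : ℕ) :
    todaWeight M Z W S (k + M) t = fun j x => todaWeight M Z W S k t j x + Z x := by
  funext j x
  have : (M : ℝ) ≠ 0 := Nat.cast_ne_zero.2 hM.ne'
  simp only [todaWeight]
  rw [show k + M + (j : ℤ) = k + j + M by ring, hWper]
  push_cast
  field_simp
  ring

theorem todaWeight_succ (hM : 0 < M) (k : ℤ) (t j : ℕ) (x : Fin N) :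
    todaWeight M Z W S k t (j + 1) x
      = todaWeight M Z W S k t j x + todaStep M Z W (k + j) x + Z x := by
  have : (M : ℝ) ≠ 0 := Nat.cast_ne_zero.2 hM.ne'
  simp only [todaWeight, todaStep]
  push_cast
  rw [show k + ((j : ℤ) + 1) = k + j + 1 by ring]
  field_simp
  ring

theorem antitone_todaStep (hWineq : ∀ (m : ℤ) (r0 r1 : Fin N), r0 < r1 →
      0 ≤ W r1 m - W r1 (m + 1) + W r0 (m + 1) - W r0 m + (Z r0 - Z r1) / M) (m : ℤ) :
    Antitone (todaStep M Z W m) := fun x y hxy => by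
  rcases eq_or_lt_of_le hxy with rfl | h
  · exact le_rfl
  · have := hWineq m x y h
    rw [sub_div] at this
    simp only [todaStep]
    linarith

theorem tau_bilinear₁ (hZ : Antitone Z) (hd : ∀ m, Antitone (todaStep M Z W m)) (hM : 0 < M)
    (hN : 0 < N) {k : ℤ} {t n : ℕ} (hn : n + 2 ≤ N) :
    τ (k + 1) (t + 1) (n + 1) + τ k t (n + 1)
      = min (τ (k + 1) t (n + 1) + τ k (t + 1) (n + 1)) (τ k t (n + 2) + τ (k + 1) (t + 1) n) := by
  simp only [tau, todaWeight_succ_time, todaWeight_add_one]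
  exact minWeight_bilinear₁ hZ (fun j => hd (k + j)) (todaWeight_succ M Z W S hM k t) hN hn

theorem tau_bilinear₁_of_eq (hZ : Antitone Z) (hd : ∀ m, Antitone (todaStep M Z W m))
    (hM : 0 < M) (hN : 0 < N) {k : ℤ} {t n : ℕ} (hn : n + 1 = N) :
    τ (k + 1) (t + 1) (n + 1) + τ k t (n + 1) = τ (k + 1) t (n + 1) + τ k (t + 1) (n + 1) := by
  simp only [tau, todaWeight_succ_time, todaWeight_add_one]
  exact minWeight_bilinear₁_of_eq hZ (fun j => hd (k + j)) (todaWeight_succ M Z W S hM k t) hN hn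

theorem tau_bilinear₂ (hZ : Antitone Z) (hd : ∀ m, Antitone (todaStep M Z W m)) (hM : 0 < M)
    (hWper : ∀ (r : Fin N) (m : ℤ), W r (m + M) = W r m) (hN : 0 < N) {k : ℤ} {t m : ℕ}
    (hm : m + 1 ≤ N) :
    τ k (t + 1) (m + 1) + τ (k + M) t m
      = min (τ k t (m + 1) + τ (k + M) (t + 1) m + S t)
          (τ (k + M) t (m + 1) + τ k (t + 1) m) := by
  simp only [tau, todaWeight_succ_time, todaWeight_add_period M Z W S hM hWper]
  exact minWeight_bilinear₂ hZ (fun j => hd (k + j)) (todaWeight_succ M Z W S hM k t) hN hm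

theorem tau_zero (k : ℤ) (t : ℕ) : τ k t 0 = 0 := minWeight_zero _

theorem tau_bilinear₂_zero (hZ : Antitone Z) (hd : ∀ m, Antitone (todaStep M Z W m))
    (hM : 0 < M) (hWper : ∀ (r : Fin N) (m : ℤ), W r (m + M) = W r m) (hN : 0 < N) (k : ℤ)
    (t : ℕ) : τ k (t + 1) 1 = min (τ k t 1 + S t) (τ (k + M) t 1) := by
  simpa only [tau_zero, add_zero] using
    tau_bilinear₂ M Z W S hZ hd hM hWper hN (k := k) (t := t) (m := 0) hN

theorem tauE_of_le {k : ℤ} {t n : ℕ} (h : n ≤ N) : 𝒯 k t n = τ k t n := if_pos h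

theorem tauE_of_lt {k : ℤ} {t n : ℕ} (h : N < n) : 𝒯 k t n = ⊤ := if_neg (by omega)

theorem tauE_zero (k : ℤ) (t : ℕ) : 𝒯 k t 0 = 0 := by
  rw [tauE_of_le M Z W S (Nat.zero_le N), tau_zero, EReal.coe_zero]

theorem tauE_Q_succ (hZ : Antitone Z) (hd : ∀ m, Antitone (todaStep M Z W m)) (hM : 0 < M)
    (hN : 0 < N) {k : ℤ} {t n : ℕ} (hn : n < N) :
    𝒯 k (t + 1) n - 𝒯 k (t + 1) (n + 1) + 𝒯 (k + 1) (t + 1) (n + 1) - 𝒯 (k + 1) (t + 1) n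
      = min (𝒯 k (t + 1) n - 𝒯 k t (n + 1) + 𝒯 (k + 1) t (n + 1) - 𝒯 (k + 1) (t + 1) n)
          (𝒯 k t (n + 2) - 𝒯 k t (n + 1) + 𝒯 k (t + 1) n - 𝒯 k (t + 1) (n + 1)) := by
  rcases Nat.lt_or_ge (n + 1) N with h | h
  · simp (disch := omega) only [tauE_of_le]
    norm_cast
    exact eq_min_of_eq_min (tau_bilinear₁ M Z W S hZ hd hM hN h) (by ring) (by ring)
  · simp (disch := omega) only [tauE_of_le, tauE_of_lt, EReal.top_sub_coe, EReal.top_add_coe,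
      min_top_right]
    norm_cast
    linarith [tau_bilinear₁_of_eq M Z W S hZ hd hM hN (k := k) (t := t) (show n + 1 = N by omega)]

theorem tauE_E_succ (hZ : Antitone Z) (hd : ∀ m, Antitone (todaStep M Z W m)) (hM : 0 < M)
    (hWper : ∀ (r : Fin N) (m : ℤ), W r (m + M) = W r m) (hN : 0 < N) {k : ℤ} {t n : ℕ}
    (hn : n < N) :
    𝒯 k (t + 1) (n + 2) - 𝒯 k (t + 1) (n + 1) + 𝒯 (k + M) (t + 1) n
        - 𝒯 (k + M) (t + 1) (n + 1)
      = min (𝒯 k t (n + 2) - 𝒯 k (t + 1) (n + 1) + 𝒯 (k + M) (t + 1) n - 𝒯 (k + M) t (n + 1)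
              + S t)
          (𝒯 (k + M) t (n + 2) - 𝒯 (k + M) t (n + 1) + 𝒯 (k + M) (t + 1) n
            - 𝒯 (k + M) (t + 1) (n + 1)) := by
  rcases Nat.lt_or_ge (n + 1) N with h | h
  · simp (disch := omega) only [tauE_of_le]
    norm_cast
    exact eq_min_of_eq_min (tau_bilinear₂ M Z W S hZ hd hM hWper hN h) (by ring) (by ring)
  · simp (disch := omega) only [tauE_of_le, tauE_of_lt, EReal.top_sub_coe, EReal.top_add_coe,
      min_self]

theorem tauE_D_succ {k : ℤ} {t n : ℕ} (hn : n + 1 < N) :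
    𝒯 k (t + 1) (n + 1) - 𝒯 k t (n + 2) + 𝒯 (k + 1) t (n + 2) - 𝒯 (k + 1) (t + 1) (n + 1)
      = 𝒯 k (t + 1) n - 𝒯 k t (n + 1) + 𝒯 (k + 1) t (n + 1) - 𝒯 (k + 1) (t + 1) n
        - (𝒯 k (t + 1) n - 𝒯 k (t + 1) (n + 1) + 𝒯 (k + 1) (t + 1) (n + 1)
          - 𝒯 (k + 1) (t + 1) n)
        + (𝒯 k t (n + 1) - 𝒯 k t (n + 2) + 𝒯 (k + 1) t (n + 2) - 𝒯 (k + 1) t (n + 1)) := by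
  simp (disch := omega) only [tauE_of_le]
  norm_cast
  ring

theorem tauE_F_succ {k : ℤ} {t n : ℕ} (hn : n + 1 < N) :
    𝒯 k t (n + 3) - 𝒯 k (t + 1) (n + 2) + 𝒯 (k + M) (t + 1) (n + 1) - 𝒯 (k + M) t (n + 2)
        + S t
      = 𝒯 k t (n + 2) - 𝒯 k (t + 1) (n + 1) + 𝒯 (k + M) (t + 1) n - 𝒯 (k + M) t (n + 1) + S t
        - (𝒯 k (t + 1) (n + 2) - 𝒯 k (t + 1) (n + 1) + 𝒯 (k + M) (t + 1) n
          - 𝒯 (k + M) (t + 1) (n + 1))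
        + (𝒯 k t (n + 3) - 𝒯 k t (n + 2) + 𝒯 (k + M) t (n + 1) - 𝒯 (k + M) t (n + 2)) := by
  rcases Nat.lt_or_ge (n + 2) N with h | h
  · simp (disch := omega) only [tauE_of_le]
    norm_cast
    ring
  · simp (disch := omega) only [tauE_of_le, tauE_of_lt, EReal.top_sub_coe, EReal.top_add_coe]
    norm_cast

theorem tauE_Et_add_one {k : ℤ} {t n : ℕ} (hn : n + 1 < N) :
    𝒯 (k + 1) t (n + 2) - 𝒯 (k + 1) t (n + 1) + 𝒯 (k + 1) (t + 1) n
        - 𝒯 (k + 1) (t + 1) (n + 1)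
      = 𝒯 k t (n + 2) - 𝒯 k t (n + 1) + 𝒯 k (t + 1) n - 𝒯 k (t + 1) (n + 1)
        - (𝒯 k (t + 1) n - 𝒯 k (t + 1) (n + 1) + 𝒯 (k + 1) (t + 1) (n + 1)
          - 𝒯 (k + 1) (t + 1) n)
        + (𝒯 k t (n + 1) - 𝒯 k t (n + 2) + 𝒯 (k + 1) t (n + 2) - 𝒯 (k + 1) t (n + 1)) := by
  simp (disch := omega) only [tauE_of_le]
  norm_cast
  ring

theorem tauE_Et_succ {k : ℤ} {t n : ℕ} (hn : n + 1 < N) :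
    𝒯 k t (n + 3) - 𝒯 k t (n + 2) + 𝒯 k (t + 1) (n + 1) - 𝒯 k (t + 1) (n + 2)
      = 𝒯 (k + M) t (n + 2) - 𝒯 (k + M) t (n + 1) + 𝒯 (k + M) (t + 1) n
          - 𝒯 (k + M) (t + 1) (n + 1)
        - (𝒯 k (t + 1) (n + 2) - 𝒯 k (t + 1) (n + 1) + 𝒯 (k + M) (t + 1) n
          - 𝒯 (k + M) (t + 1) (n + 1))
        + (𝒯 k t (n + 3) - 𝒯 k t (n + 2) + 𝒯 (k + M) t (n + 1) - 𝒯 (k + M) t (n + 2)) := by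
  rcases Nat.lt_or_ge (n + 2) N with h | h
  · simp (disch := omega) only [tauE_of_le]
    norm_cast
    ring
  · simp (disch := omega) only [tauE_of_le, tauE_of_lt, EReal.top_sub_coe, EReal.top_add_coe]
    norm_cast

theorem tauE_D_zero (k : ℤ) (t : ℕ) :
    𝒯 k (t + 1) 0 - 𝒯 k t 1 + 𝒯 (k + 1) t 1 - 𝒯 (k + 1) (t + 1) 0
      = 𝒯 k t 0 - 𝒯 k t 1 + 𝒯 (k + 1) t 1 - 𝒯 (k + 1) t 0 := by
  simp only [tauE_zero]

theorem sum_tauE_Q_zero (hN : 0 < N) (k : ℤ) (t m : ℕ) :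
    ∑ j ∈ range m, (𝒯 (k + j) t 0 - 𝒯 (k + j) t 1 + 𝒯 (k + j + 1) t 1 - 𝒯 (k + j + 1) t 0)
      = ((τ (k + m) t 1 - τ k t 1 : ℝ) : EReal) := by
  refine sum_range_induction _ (fun m => ((τ (k + m) t 1 - τ k t 1 : ℝ) : EReal)) (by simp) m
    fun j _ => ?_
  simp (disch := omega) only [tauE_of_le, tau_zero]
  norm_cast
  push_cast
  ring_nf

theorem tauE_F_zero (hZ : Antitone Z) (hd : ∀ m, Antitone (todaStep M Z W m)) (hM : 0 < M)
    (hWper : ∀ (r : Fin N) (m : ℤ), W r (m + M) = W r m) (hN : 0 < N) (k : ℤ) (t : ℕ) :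
    𝒯 k t 2 - 𝒯 k (t + 1) 1 + 𝒯 (k + M) (t + 1) 0 - 𝒯 (k + M) t 1 + S t
      = 𝒯 k t 2 - 𝒯 k t 1 + 𝒯 (k + M) t 0 - 𝒯 (k + M) t 1
        + max 0 ((S t : EReal) - ((τ (k + M) t 1 - τ k t 1 : ℝ) : EReal)) := by
  rcases Nat.lt_or_ge 1 N with h | h
  · simp (disch := omega) only [tauE_of_le, tau_zero]
    norm_cast
    rw [show S t - (τ (k + M) t 1 - τ k t 1) = τ k t 1 + S t - τ (k + M) t 1 by ring,
      ← sub_min_eq_max_zero, ← tau_bilinear₂_zero M Z W S hZ hd hM hWper hN]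
    ring
  · simp (disch := omega) only [tauE_of_le, tauE_of_lt, tau_zero, EReal.coe_zero, add_zero,
      EReal.top_sub_coe, EReal.top_add_coe, top_add_max_zero]

theorem tauE_Et_zero (hZ : Antitone Z) (hd : ∀ m, Antitone (todaStep M Z W m)) (hM : 0 < M)
    (hWper : ∀ (r : Fin N) (m : ℤ), W r (m + M) = W r m) (hN : 0 < N) (k : ℤ) (t : ℕ) :
    𝒯 k t 2 - 𝒯 k t 1 + 𝒯 k (t + 1) 0 - 𝒯 k (t + 1) 1
      = 𝒯 k t 2 - 𝒯 k t 1 + 𝒯 (k + M) t 0 - 𝒯 (k + M) t 1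
        + max 0 (((τ (k + M) t 1 - τ k t 1 : ℝ) : EReal) - S t) := by
  rcases Nat.lt_or_ge 1 N with h | h
  · simp (disch := omega) only [tauE_of_le, tau_zero]
    norm_cast
    rw [show τ (k + M) t 1 - τ k t 1 - S t = τ (k + M) t 1 - (τ k t 1 + S t) by ring,
      ← sub_min_eq_max_zero, min_comm, ← tau_bilinear₂_zero M Z W S hZ hd hM hWper hN]
    ring
  · simp (disch := omega) only [tauE_of_le, tauE_of_lt, tau_zero, EReal.coe_zero, add_zero,
      EReal.top_sub_coe, top_add_max_zero]

end Toda

end UltradiscreteToda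

/-- The ultradiscrete tau functions `T^{(k,t)}_n` (minima over strictly increasing tuples,
with value `+∞` for `n > N`) solve the nonautonomous ultradiscrete hungry Toda lattice
with the finite lattice boundary condition (Theorem 5 of the paper). -/
theorem stmt_18
    (M N : ℕ) (hM : 1 ≤ M) (hN : 1 ≤ N)
    (Z : Fin N → ℝ) (hZ : ∀ r r' : Fin N, r ≤ r' → Z r' ≤ Z r)
    (W : Fin N → ℤ → ℝ) (hWper : ∀ (r : Fin N) (m : ℤ), W r (m + M) = W r m)
    (hWineq : ∀ (m : ℤ) (r0 r1 : Fin N), r0 < r1 →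
      0 ≤ W r1 m - W r1 (m + 1) + W r0 (m + 1) - W r0 m + (Z r0 - Z r1) / M)
    (S : ℕ → ℝ)
    (T : ℤ → ℕ → ℕ → EReal)
    (hT0 : ∀ (k : ℤ) (t : ℕ), T k t 0 = 0)
    (hT : ∀ (k : ℤ) (t n : ℕ), T k t (n + 1) =
      (Finset.univ.filter (fun r : Fin (n + 1) → Fin N => StrictMono r)).inf
        (fun r => ((∑ j : Fin (n + 1),
          (W (r j) (k + (j : ℕ)) +
            ((k + (M + 1) * ((j : ℕ) : ℤ) : ℤ) : ℝ) / (M : ℝ) * Z (r j) +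
            ∑ τ ∈ Finset.range t, min (Z (r j)) (S τ)) : ℝ) : EReal)))
    (Q E Et D F : ℤ → ℕ → ℕ → EReal)
    (hQ : ∀ (k : ℤ) (t n : ℕ), n < N → Q k t n
      = T k t n - T k t (n + 1) + T (k + 1) t (n + 1) - T (k + 1) t n)
    (hE : ∀ (k : ℤ) (t n : ℕ), n < N → E k t n
      = T k t (n + 2) - T k t (n + 1) + T (k + M) t n - T (k + M) t (n + 1))
    (hEt : ∀ (k : ℤ) (t n : ℕ), n < N → Et k t n
      = T k t (n + 2) - T k t (n + 1) + T k (t + 1) n - T k (t + 1) (n + 1))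
    (hD : ∀ (k : ℤ) (t n : ℕ), n < N → D k t n
      = T k (t + 1) n - T k t (n + 1) + T (k + 1) t (n + 1) - T (k + 1) (t + 1) n)
    (hF : ∀ (k : ℤ) (t n : ℕ), n < N → F k t n
      = T k t (n + 2) - T k (t + 1) (n + 1) + T (k + M) (t + 1) n - T (k + M) t (n + 1)
        + (S t : EReal)) :
    (∀ (k : ℤ) (t n : ℕ), n < N →
      Q k (t + 1) n = min (D k t n) (Et k t n)) ∧
    (∀ (k : ℤ) (t n : ℕ), n < N →
      E k (t + 1) n = min (F k t n) (Et (k + M) t n)) ∧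
    (∀ (k : ℤ) (t n : ℕ), n + 1 < N →
      D k t (n + 1) = D k t n - Q k (t + 1) n + Q k t (n + 1)) ∧
    (∀ (k : ℤ) (t n : ℕ), n + 1 < N →
      F k t (n + 1) = F k t n - E k (t + 1) n + E k t (n + 1)) ∧
    (∀ (k : ℤ) (t n : ℕ), n + 1 < N →
      Et (k + 1) t n = Et k t n - Q k (t + 1) n + Q k t (n + 1)) ∧
    (∀ (k : ℤ) (t n : ℕ), n + 1 < N →
      Et k t (n + 1) = Et (k + M) t n - E k (t + 1) n + E k t (n + 1)) ∧
    (∀ (k : ℤ) (t : ℕ), D k t 0 = Q k t 0) ∧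
    (∀ (k : ℤ) (t : ℕ), F k t 0 = E k t 0 +
      max 0 ((S t : EReal) - ∑ j ∈ Finset.range M, Q (k + j) t 0)) ∧
    (∀ (k : ℤ) (t : ℕ), Et k t 0 = E k t 0 +
      max 0 ((∑ j ∈ Finset.range M, Q (k + j) t 0) - (S t : EReal))) := by
  open UltradiscreteToda in
  have hd := antitone_todaStep M Z W hWineq
  obtain rfl : T = tauE M Z W S := by
    funext k t n
    cases n with
    | zero => rw [hT0, tauE_zero]
    | succ n => rw [hT]; exact inf_strictMono_eq_ite (todaWeight M Z W S k t) (n + 1)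
  refine ⟨fun k t n hn => ?_, fun k t n hn => ?_, fun k t n hn => ?_, fun k t n hn => ?_,
    fun k t n hn => ?_, fun k t n hn => ?_, fun k t => ?_, fun k t => ?_, fun k t => ?_⟩
  · rw [hQ k (t + 1) n hn, hD k t n hn, hEt k t n hn]
    exact tauE_Q_succ M Z W S hZ hd hM hN hn
  · rw [hE k (t + 1) n hn, hF k t n hn, hEt (k + M) t n hn]
    exact tauE_E_succ M Z W S hZ hd hM hWper hN hn
  · rw [hD k t (n + 1) hn, hD k t n (by omega), hQ k (t + 1) n (by omega), hQ k t (n + 1) hn]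
    exact tauE_D_succ M Z W S hn
  · rw [hF k t (n + 1) hn, hF k t n (by omega), hE k (t + 1) n (by omega), hE k t (n + 1) hn]
    exact tauE_F_succ M Z W S hn
  · rw [hEt (k + 1) t n (by omega), hEt k t n (by omega), hQ k (t + 1) n (by omega),
      hQ k t (n + 1) hn]
    exact tauE_Et_add_one M Z W S hn
  · rw [hEt k t (n + 1) hn, hEt (k + M) t n (by omega), hE k (t + 1) n (by omega),
      hE k t (n + 1) hn]
    exact tauE_Et_succ M Z W S hn
  · rw [hD k t 0 hN, hQ k t 0 hN]
    exact tauE_D_zero M Z W S k t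
  · rw [hF k t 0 hN, hE k t 0 hN, sum_congr rfl fun (j : ℕ) _ => hQ (k + j) t 0 hN,
      sum_tauE_Q_zero M Z W S hN]
    exact tauE_F_zero M Z W S hZ hd hM hWper hN k t
  · rw [hEt k t 0 hN, hE k t 0 hN, sum_congr rfl fun (j : ℕ) _ => hQ (k + j) t 0 hN,
      sum_tauE_Q_zero M Z W S hN]
    exact tauE_Et_zero M Z W S hZ hd hM hWper hN k t
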